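/- arXiv:2605.05558 — 2 statements merged into one kernel-verified Lean document; each statement's English description precedes it below -/
import Mathlib

section
/- Let W_H > 0, k > 0, r_c > 0, λ > 0, and suppose (x₀, y₀) minimizes the cost C(x,y) = W_H·x + k·r_c·y over the feasible set S = {(x, y) ∈ ℝ² : x ≥ 0, y ≥ 0, x + λ⁻¹·y ≥ 1}. If x₀ > 0, then W_H ≤ λ·k·r_c. -/
/-! Moving all human labor `x₀` of an optimal plan onto agents, at `λ` agent units per human unit,
keeps effective labor unchanged, so `(0, y₀ + λ x₀)` is feasible. Optimality then gives
`W_H x₀ ≤ λ k r_c x₀`, and `x₀ > 0` can be cancelled. -/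

lemma inv_mul_add_mul_eq {lam : ℝ} (hlam : lam ≠ 0) (x y : ℝ) :
    lam⁻¹ * (y + lam * x) = x + lam⁻¹ * y := by
  field_simp
  ring

lemma le_mul_of_mul_add_le_mul_add_mul {w c lam x y : ℝ} (hx : 0 < x)
    (h : w * x + c * y ≤ c * (y + lam * x)) : w ≤ lam * c := by
  have hwx : w * x ≤ lam * c * x := by linarith
  exact le_of_mul_le_mul_right hwx hx

theorem caw_bound_general (W_H k r_c lam x₀ y₀ : ℝ)
    (hlam : 0 < lam)
    (hmem : 0 ≤ x₀ ∧ 0 ≤ y₀ ∧ 1 ≤ x₀ + lam⁻¹ * y₀)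
    (hmin : ∀ p : ℝ × ℝ, 0 ≤ p.1 → 0 ≤ p.2 → 1 ≤ p.1 + lam⁻¹ * p.2 →
      W_H * x₀ + k * r_c * y₀ ≤ W_H * p.1 + k * r_c * p.2)
    (hx : 0 < x₀) :
    W_H ≤ lam * k * r_c := by
  obtain ⟨-, hy0, hfeas⟩ := hmem
  have hauto_feas : 1 ≤ 0 + lam⁻¹ * (y₀ + lam * x₀) := by
    rwa [inv_mul_add_mul_eq hlam.ne', zero_add]
  have hauto := hmin (0, y₀ + lam * x₀) le_rfl (by positivity) hauto_feas
  rw [mul_zero, zero_add] at hauto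
  rw [mul_assoc]
  exact le_mul_of_mul_add_le_mul_add_mul hx hauto

/-- If `(x₀, y₀)` minimizes `C(x,y) = W_H·x + k·r_c·y` over
`S = {(x,y) : x ≥ 0, y ≥ 0, x + λ⁻¹·y ≥ 1}` and `x₀ > 0`, then `W_H ≤ λ·k·r_c`. -/
theorem caw_bound (W_H k r_c lam x₀ y₀ : ℝ)
    (hW : 0 < W_H) (hk : 0 < k) (hr : 0 < r_c) (hlam : 0 < lam)
    (hmem : 0 ≤ x₀ ∧ 0 ≤ y₀ ∧ 1 ≤ x₀ + lam⁻¹ * y₀)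
    (hmin : ∀ p : ℝ × ℝ, 0 ≤ p.1 → 0 ≤ p.2 → 1 ≤ p.1 + lam⁻¹ * p.2 →
      W_H * x₀ + k * r_c * y₀ ≤ W_H * p.1 + k * r_c * p.2)
    (hx : 0 < x₀) :
    W_H ≤ lam * k * r_c :=
  caw_bound_general W_H k r_c lam x₀ y₀ hlam hmem hmin hx
end

section
/- Let W_H > 0, k > 0, r_c > 0, λ > 0 and suppose W_H > λ·k·r_c. Then every (x, y) in the feasible set S = {(x, y) ∈ ℝ² : x ≥ 0, y ≥ 0, x + λ⁻¹·y ≥ 1} with x > 0 has cost C(x,y) = W_H·x + k·r_c·y strictly greater than the minimum cost λ·k·r_c; in particular no cost-minimizing configuration employs positive human labor. -/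
/-!
Multiplying the feasibility constraint by `λ` gives `λ x + y ≥ λ`, hence
`k r_c (λ x + y) ≥ λ k r_c`. Since `W_H > λ k r_c` and `x > 0`, the actual cost
`W_H x + k r_c y` strictly exceeds `k r_c (λ x + y)`.
-/

lemma le_mul_add_of_one_le_add_inv_mul {lam x y : ℝ} (hlam : 0 < lam)
    (h : 1 ≤ x + lam⁻¹ * y) : lam ≤ lam * x + y := by
  have := mul_le_mul_of_nonneg_left h hlam.le
  rwa [mul_one, mul_add, ← mul_assoc, mul_inv_cancel₀ hlam.ne', one_mul] at this

lemma mul_lt_cost_of_one_le_add_inv_mul {w c lam x y : ℝ} (hc : 0 ≤ c) (hlam : 0 < lam)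
    (hw : lam * c < w) (hx : 0 < x) (h : 1 ≤ x + lam⁻¹ * y) :
    lam * c < w * x + c * y :=
  calc lam * c = c * lam := mul_comm _ _
    _ ≤ c * (lam * x + y) := mul_le_mul_of_nonneg_left (le_mul_add_of_one_le_add_inv_mul hlam h) hc
    _ = lam * c * x + c * y := by ring
    _ < w * x + c * y := by gcongr

theorem caw_displacement_general (W_H k r_c lam : ℝ)
    (hk : 0 < k) (hr : 0 < r_c) (hlam : 0 < lam)
    (hgt : lam * k * r_c < W_H) :
    ∀ p : ℝ × ℝ, 0 ≤ p.1 → 0 ≤ p.2 → 1 ≤ p.1 + lam⁻¹ * p.2 → 0 < p.1 →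
      lam * k * r_c < W_H * p.1 + k * r_c * p.2 := by
  intro p _ _ hfeas hx
  rw [mul_assoc] at hgt ⊢
  exact mul_lt_cost_of_one_le_add_inv_mul (mul_pos hk hr).le hlam hgt hx hfeas

/-- If `W_H > λ·k·r_c`, then every feasible `(x, y)` with `x > 0`
has cost strictly greater than the minimum cost `λ·k·r_c`: human labor is priced
out of the substitutable task set. -/
theorem caw_displacement (W_H k r_c lam : ℝ)
    (hW : 0 < W_H) (hk : 0 < k) (hr : 0 < r_c) (hlam : 0 < lam)
    (hgt : lam * k * r_c < W_H) :
    ∀ p : ℝ × ℝ, 0 ≤ p.1 → 0 ≤ p.2 → 1 ≤ p.1 + lam⁻¹ * p.2 → 0 < p.1 →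
      lam * k * r_c < W_H * p.1 + k * r_c * p.2 :=
  caw_displacement_general W_H k r_c lam hk hr hlam hgt
end
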